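/- (IMLL-AtComp: atomic soundness and completeness) For every base B, all finite multisets of atoms P and S, and every atom q: P ⨾ S ⊢_B q if and only if P ⊩_B^S q. -/

import Mathlib

/-- Formulas of intuitionistic multiplicative linear logic over a
countably infinite set of atoms (here: `ℕ`). -/
inductive MForm : Type where
  | atom : ℕ → MForm
  | tensor : MForm → MForm → MForm
  | unit : MForm
  | limp : MForm → MForm → MForm
deriving DecidableEq

/-- An atomic rule `(P₁ ▷ p₁, …, Pₙ ▷ pₙ) ⇒ p`: a (possibly empty) finite
set of atomic sequents together with a conclusion atom. -/
structure MRule : Type where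
  prems : Finset (Multiset ℕ × ℕ)
  concl : ℕ

/-- A base is a set of atomic rules. -/
abbrev MBase := Set MRule

/-- Derivability in a base `B`: `P ⊢_B p`. -/
inductive MDer (B : MBase) : Multiset ℕ → ℕ → Prop where
  | ref (p : ℕ) : MDer B {p} p
  | app {r : MRule} (hr : r ∈ B) (S : Multiset ℕ × ℕ → Multiset ℕ)
      (h : ∀ pr ∈ r.prems, MDer B (S pr + pr.1) pr.2) :
      MDer B (r.prems.sum S) r.concl

/-- The resource-indexed support relation `⊩_B^P φ`. -/
def MSupp : MForm → MBase → Multiset ℕ → Prop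
  | .atom p, B, P => MDer B P p
  | .tensor φ ψ, B, P => ∀ X : MBase, B ⊆ X → ∀ U : Multiset ℕ, ∀ p : ℕ,
      (∀ Y : MBase, X ⊆ Y → ∀ V : Multiset ℕ,
        (∃ V₁ V₂ : Multiset ℕ, V = V₁ + V₂ ∧ MSupp φ Y V₁ ∧ MSupp ψ Y V₂) →
        MDer Y (U + V) p) →
      MDer X (P + U) p
  | .unit, B, P => ∀ X : MBase, B ⊆ X → ∀ U : Multiset ℕ, ∀ p : ℕ,
      MDer X U p → MDer X (P + U) p
  | .limp φ ψ, B, P => ∀ X : MBase, B ⊆ X → ∀ U : Multiset ℕ,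
      MSupp φ X U → MSupp ψ X (P + U)

/-- Support of a multiset of formulas: `⊩_B^P Γ`, obtained by splitting
the resources `P` among the members of `Γ`. -/
inductive MSuppCtx (B : MBase) : Multiset ℕ → Multiset MForm → Prop where
  | nil : MSuppCtx B 0 0
  | cons {P Q : Multiset ℕ} {φ : MForm} {Γ : Multiset MForm} :
      MSupp φ B P → MSuppCtx B Q Γ → MSuppCtx B (P + Q) (φ ::ₘ Γ)

/-- Support of a sequent: `Γ ⊩_B^P φ` (clause (Inf)). -/
def MSuppInf (Γ : Multiset MForm) (B : MBase) (P : Multiset ℕ) (φ : MForm) : Prop :=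
  ∀ X : MBase, B ⊆ X → ∀ U : Multiset ℕ, MSuppCtx X U Γ → MSupp φ X (P + U)

/-- Validity: `Γ ⊩ φ` iff `Γ ⊩_B^∅ φ` for every base `B`. -/
def MValid (Γ : Multiset MForm) (φ : MForm) : Prop :=
  ∀ B : MBase, MSuppInf Γ B 0 φ

/-- The natural deduction system NIMLL: `Γ ⊢ φ`. -/
inductive NIMLL : Multiset MForm → MForm → Prop where
  | ax (φ : MForm) : NIMLL {φ} φ
  | limpI {Γ : Multiset MForm} {φ ψ : MForm} :
      NIMLL (φ ::ₘ Γ) ψ → NIMLL Γ (.limp φ ψ)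
  | limpE {Γ Δ : Multiset MForm} {φ ψ : MForm} :
      NIMLL Γ (.limp φ ψ) → NIMLL Δ φ → NIMLL (Γ + Δ) ψ
  | unitI : NIMLL 0 .unit
  | unitE {Γ Δ : Multiset MForm} {φ : MForm} :
      NIMLL Γ φ → NIMLL Δ .unit → NIMLL (Γ + Δ) φ
  | tensorI {Γ Δ : Multiset MForm} {φ ψ : MForm} :
      NIMLL Γ φ → NIMLL Δ ψ → NIMLL (Γ + Δ) (.tensor φ ψ)
  | tensorE {Γ Δ : Multiset MForm} {φ ψ χ : MForm} :
      NIMLL Γ (.tensor φ ψ) → NIMLL (φ ::ₘ ψ ::ₘ Δ) χ → NIMLL (Γ + Δ) χ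


/-!
Soundness: a support of the atoms `P` with resources `U` is a splitting of `U` into
derivations `Uᵢ ⊢ pᵢ`, one for each `pᵢ ∈ P`; derivability is stable under extending the
base and closed under cut, so these can be cut one by one into a derivation of `P ⨾ S ⊢ q`,
giving `S ⨾ U ⊢ q`. Completeness: take the base `B` itself and `U = P`, each atom of `P`
being supported by itself through (Ref).
-/

theorem MDer.mono {B X : MBase} (hBX : B ⊆ X) {T : Multiset ℕ} {q : ℕ}
    (h : MDer B T q) : MDer X T q := by
  induction h with
  | ref p => exact .ref p
  | app hr S _ ih => exact .app (hBX hr) S ih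

theorem MDer.cut {X : MBase} {T U : Multiset ℕ} {p q : ℕ}
    (hT : MDer X T q) (hp : p ∈ T) (hU : MDer X U p) :
    MDer X (T.erase p + U) q := by
  classical
  induction hT with
  | ref r =>
    obtain rfl : p = r := Multiset.mem_singleton.mp hp
    simpa using hU
  | @app r hr S h ih =>
    -- `p` is consumed by one premise `pr₀`; cut there and leave the other premises alone.
    obtain ⟨pr₀, hpr₀, hpS⟩ := Multiset.mem_sum.mp hp
    let S' := Function.update S pr₀ ((S pr₀).erase p + U)
    have hprems : ∀ pr ∈ r.prems, MDer X (S' pr + pr.1) pr.2 := by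
      intro pr hpr
      by_cases hpr₀' : pr = pr₀
      · subst hpr₀'
        have hcut := ih pr hpr (Multiset.mem_add.mpr (.inl hpS))
        rw [Multiset.erase_add_left_pos _ hpS] at hcut
        simpa only [S', Function.update_self, add_right_comm] using hcut
      · simpa only [S', Function.update_of_ne hpr₀'] using h pr hpr
    have hsum : r.prems.sum S' = (r.prems.sum S).erase p + U := by
      rw [Finset.sum_update_of_mem hpr₀, ← Finset.add_sum_erase _ _ hpr₀,
        Multiset.erase_add_left_pos _ hpS, Finset.sdiff_singleton_eq_erase, add_right_comm]
    simpa only [hsum] using MDer.app hr S' hprems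

theorem MSuppCtx.map_atom_self (B : MBase) (P : Multiset ℕ) :
    MSuppCtx B P (P.map MForm.atom) := by
  induction P using Multiset.induction with
  | empty => exact .nil
  | cons a P ih => simpa using MSuppCtx.cons (φ := .atom a) (MDer.ref (B := B) a) ih

theorem MSuppCtx.cut_atoms {X : MBase} {U : Multiset ℕ} {Γ : Multiset MForm}
    (hctx : MSuppCtx X U Γ) {P S : Multiset ℕ} {q : ℕ} (hΓ : Γ = P.map MForm.atom)
    (hder : MDer X (P + S) q) : MDer X (S + U) q := by
  classical
  induction hctx generalizing P S with
  | nil =>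
    obtain rfl : P = 0 := Multiset.map_eq_zero.mp hΓ.symm
    simpa using hder
  | @cons U₁ U₂ φ Γ hφ _ ih =>
    obtain ⟨a, ha, rfl, hP⟩ := (Multiset.map_eq_cons _ _ _ _).mpr hΓ.symm
    have hcut := hder.cut (Multiset.mem_add.mpr (.inl ha)) hφ
    rw [Multiset.erase_add_left_pos _ ha, add_assoc] at hcut
    simpa only [add_assoc] using ih hP.symm hcut

/-- (IMLL-AtComp: atomic soundness and completeness)
`P ⨾ S ⊢_B q` iff `P ⊩_B^S q`. -/
theorem imll_at_comp (B : MBase) (P S : Multiset ℕ) (q : ℕ) :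
    MDer B (P + S) q ↔ MSuppInf (P.map MForm.atom) B S (.atom q) := by
  refine ⟨fun h X hBX U hctx => hctx.cut_atoms rfl (h.mono hBX), fun h => ?_⟩
  have hself : MDer B (S + P) q := h B le_rfl P (MSuppCtx.map_atom_self B P)
  rwa [add_comm] at hself
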